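/- arXiv:1805.10830 — 3 statements merged into one kernel-verified Lean document; each statement's English description precedes it below -/
import Mathlib

section
/- Let G, N be finite groups of equal order, 𝔣 : G → Aut(N) a homomorphism and 𝔤 ∈ Z¹_𝔣(G,N) a crossed homomorphism. Then the image of the homomorphism β(σ) = ρ(𝔤(σ))·𝔣(σ) is a regular subgroup of Perm(N) if and only if 𝔤 is bijective. -/
/-- The right regular representation `ρ : N → Perm N`, `ρ(η)(τ) = τ * η⁻¹`. -/
def rho (N : Type*) [Group N] : N →* Equiv.Perm N where
  toFun η := Equiv.mulRight η⁻¹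
  map_one' := by ext x; simp
  map_mul' a b := by ext x; simp [mul_assoc]

/-!
Since `𝔣 σ` fixes `1`, the permutation `β σ = ρ(𝔤 σ) * 𝔣 σ` sends `1` to `(𝔤 σ)⁻¹`. Hence evaluation
at `1` on the image of `β`, composed with the surjection `G → image β`, is `σ ↦ (𝔤 σ)⁻¹`; as `|G| = |N|`,
it is bijective exactly when `𝔤` is.
-/

theorem Function.Bijective.of_comp_of_surjective {α β γ : Type*} {k : β → γ} {g : α → β}
    (h : Function.Bijective (k ∘ g)) (hg : Function.Surjective g) : Function.Bijective k :=
  ⟨h.injective.of_comp_right hg, h.surjective.of_comp⟩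

theorem rho_mul_toPerm_apply_one {N : Type*} [Group N] (η : N) (φ : MulAut N) :
    (rho N η * MulAut.toPerm N φ) 1 = η⁻¹ := by
  show φ 1 * η⁻¹ = η⁻¹
  rw [map_one, one_mul]

theorem beta_image_regular_iff_bijective_general (G N : Type*) [Group G] [Group N]
    [Fintype G] [Fintype N] (hcard : Fintype.card G = Fintype.card N)
    (𝔣 : G →* MulAut N) (𝔤 : G → N) :
    (Function.Bijective
        (fun π : Set.range (fun σ : G => rho N (𝔤 σ) * MulAut.toPerm N (𝔣 σ)) =>
          (π : Equiv.Perm N) 1)) ↔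
      Function.Bijective 𝔤 := by
  set β := fun σ : G => rho N (𝔤 σ) * MulAut.toPerm N (𝔣 σ)
  have hcomp : (fun π : Set.range β => (π : Equiv.Perm N) 1) ∘ Set.rangeFactorization β =
      (·⁻¹) ∘ 𝔤 :=
    funext fun σ => rho_mul_toPerm_apply_one (𝔤 σ) (𝔣 σ)
  constructor
  · intro h
    have hsurj : Function.Surjective ((·⁻¹) ∘ 𝔤) :=
      hcomp ▸ h.surjective.comp Set.rangeFactorization_surjective
    exact (Fintype.bijective_iff_surjective_and_card 𝔤).mpr
      ⟨hsurj.of_comp_left inv_injective, hcard⟩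
  · intro h
    refine Function.Bijective.of_comp_of_surjective ?_ Set.rangeFactorization_surjective
    rw [hcomp]
    exact inv_involutive.bijective.comp h

/-- The image of β(σ) = ρ(𝔤(σ))·𝔣(σ) is a regular subgroup of Perm(N)
(i.e. evaluation at 1 is a bijection from it onto N) iff 𝔤 is bijective. -/
theorem beta_image_regular_iff_bijective (G N : Type*) [Group G] [Group N]
    [Fintype G] [Fintype N] (hcard : Fintype.card G = Fintype.card N)
    (𝔣 : G →* MulAut N) (𝔤 : G → N)
    (hg : ∀ σ₁ σ₂ : G, 𝔤 (σ₁ * σ₂) = 𝔤 σ₁ * 𝔣 σ₁ (𝔤 σ₂)) :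
    (Function.Bijective
        (fun π : Set.range (fun σ : G => rho N (𝔤 σ) * MulAut.toPerm N (𝔣 σ)) =>
          (π : Equiv.Perm N) 1)) ↔
      Function.Bijective 𝔤 :=
  beta_image_regular_iff_bijective_general G N hcard 𝔣 𝔤
end

section
/- Let G, N be finite groups of the same order, f : G → N a homomorphism, and 𝔣(σ) = conj(f(σ)) (conjugation by f(σ)) for σ ∈ G. Then the map sending a crossed homomorphism 𝔤 ∈ Z¹_𝔣(G,N) to the function σ ↦ 𝔤(σ)·f(σ) is a bijection from Z¹_𝔣(G,N) to Hom(G,N), and 𝔤 is bijective if and only if the pair (f, σ ↦ 𝔤(σ)f(σ)) is fixed point free. -/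
/-!
Multiplying on the right by `f` turns the cocycle identity for conjugation by `f` into
multiplicativity, so `𝔤 ↦ 𝔤 * f` identifies crossed homomorphisms with homomorphisms `h`.
Then `𝔤 = h * f⁻¹` takes equal values at `σ` and `τ` exactly when `f` and `h` agree at
`τ⁻¹ * σ`, so `𝔤` is injective iff `(f, h)` is fixed point free, and `|G| = |N|` upgrades
injective to bijective.
-/

namespace MonoidHom

variable {G N : Type*} [Group G] [Group N]

theorem crossedHom_conj_iff_mul_map_mul (f : G →* N) (𝔤 : G → N) :
    (∀ σ τ, 𝔤 (σ * τ) = 𝔤 σ * (f σ * 𝔤 τ * (f σ)⁻¹)) ↔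
      ∀ σ τ, (𝔤 * f) (σ * τ) = (𝔤 * f) σ * (𝔤 * f) τ := by
  refine forall₂_congr fun σ τ => ?_
  rw [Pi.mul_apply, Pi.mul_apply, Pi.mul_apply, map_mul, ← mul_left_inj (f σ * f τ)]
  simp only [mul_assoc, inv_mul_cancel_left]

theorem mul_inv_eq_mul_inv_iff (f h : G →* N) (σ τ : G) :
    h σ * (f σ)⁻¹ = h τ * (f τ)⁻¹ ↔ f (τ⁻¹ * σ) = h (τ⁻¹ * σ) := by
  rw [map_mul, map_mul, map_inv, map_inv, mul_inv_eq_iff_eq_mul, mul_assoc,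
    ← inv_mul_eq_iff_eq_mul, eq_comm]

theorem injective_mul_inv_iff (f h : G →* N) :
    Function.Injective (fun σ => h σ * (f σ)⁻¹) ↔ ∀ σ, f σ = h σ → σ = 1 := by
  refine ⟨fun hinj σ hσ => hinj ?_, fun hfpf σ τ hστ => ?_⟩
  · rwa [mul_inv_eq_mul_inv_iff, inv_one, one_mul]
  · exact (inv_mul_eq_one.mp (hfpf _ ((mul_inv_eq_mul_inv_iff f h σ τ).mp hστ))).symm

end MonoidHom

/-- When 𝔣(σ) = conj(f(σ)) for a homomorphism f : G → N, the map 𝔤 ↦ (σ ↦ 𝔤(σ)·f(σ))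
is a bijection from the crossed homomorphisms Z¹_𝔣(G,N) to Hom(G,N); moreover a
crossed homomorphism 𝔤 is bijective iff the pair (f, σ ↦ 𝔤(σ)f(σ)) is
fixed point free. -/
theorem crossed_hom_equiv_hom_of_inner (G N : Type*) [Group G] [Group N]
    [Fintype G] [Fintype N] (hcard : Fintype.card G = Fintype.card N)
    (f : G →* N) :
    (Set.BijOn (fun (𝔤 : G → N) => fun σ => 𝔤 σ * f σ)
        {𝔤 | ∀ σ τ : G, 𝔤 (σ * τ) = 𝔤 σ * (f σ * 𝔤 τ * (f σ)⁻¹)}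
        {h | ∀ σ τ : G, h (σ * τ) = h σ * h τ}) ∧
      ∀ 𝔤 : G → N, (∀ σ τ : G, 𝔤 (σ * τ) = 𝔤 σ * (f σ * 𝔤 τ * (f σ)⁻¹)) →
        (Function.Bijective 𝔤 ↔ ∀ σ : G, f σ = 𝔤 σ * f σ → σ = 1) := by
  refine ⟨(Equiv.mulRight (f : G → N)).bijOn fun 𝔤 =>
    (f.crossedHom_conj_iff_mul_map_mul 𝔤).symm, fun 𝔤 h𝔤 => ?_⟩
  let h : G →* N := MonoidHom.mk' (𝔤 * f) ((f.crossedHom_conj_iff_mul_map_mul 𝔤).mp h𝔤)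
  have h𝔤_eq : 𝔤 = fun σ => h σ * (f σ)⁻¹ := funext fun σ => (mul_inv_cancel_right _ _).symm
  calc Function.Bijective 𝔤 ↔ Function.Injective 𝔤 := by
        rw [Fintype.bijective_iff_injective_and_card, and_iff_left hcard]
    _ ↔ ∀ σ, f σ = h σ → σ = 1 := by rw [h𝔤_eq, f.injective_mul_inv_iff]
end

section
/- With M characteristic in N such that N/M is abelian, 𝔣 : G → Aut(N) a homomorphism and 𝔤 a crossed homomorphism with induced maps 𝔣̄, 𝔤̄: for every σ ∈ ker(𝔣̄) ∩ Z(G), the element 𝔤̄(σ) ∈ N/M is fixed by every automorphism in the image 𝔣̄(G). -/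
/-- With N/M abelian, for σ ∈ ker(𝔣̄) ∩ Z(G), the element 𝔤̄(σ) ∈ N/M is fixed by
every automorphism in the image of the induced action 𝔣̄. -/
theorem induced_crossed_hom_central_fixed (G N : Type*) [Group G] [Group N]
    [Finite G] [Finite N] (M : Subgroup N) [M.Characteristic]
    (habel : ∀ a b : N ⧸ M, a * b = b * a)
    (𝔣 : G →* MulAut N) (𝔤 : G → N)
    (hg : ∀ σ₁ σ₂ : G, 𝔤 (σ₁ * σ₂) = 𝔤 σ₁ * 𝔣 σ₁ (𝔤 σ₂)) :
    ∀ σ : G, σ ∈ Subgroup.center G →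
      (∀ η : N, ((𝔣 σ η : N ⧸ M)) = (η : N ⧸ M)) →
      ∀ τ : G, ((𝔣 τ (𝔤 σ) : N ⧸ M)) = (𝔤 σ : N ⧸ M) := by
  intro σ hσ hfix τ
  have hc : τ * σ = σ * τ := Subgroup.mem_center_iff.mp hσ τ
  have h : ((𝔤 σ * 𝔣 σ (𝔤 τ) : N) : N ⧸ M) = ((𝔤 τ * 𝔣 τ (𝔤 σ) : N) : N ⧸ M) := by
    rw [← hg, ← hg, hc]
  rw [QuotientGroup.mk_mul, QuotientGroup.mk_mul, hfix (𝔤 τ), habel] at h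
  exact (mul_left_cancel h).symm
end
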